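/- arXiv:2002.08561 — 4 statements merged into one kernel-verified Lean document; each statement's English description precedes it below -/
import Mathlib

section
/- Let A ∈ ℝ^{m×N}, b ∈ ℝ^m, E ∈ ℝ^{r×N}, C a polyhedral set in ℝ^N, q > 1, and let ‖·‖⋆ be a norm on ℝ^r. Consider the problem (P₂): min_{x ∈ C} (1/2)‖Ax − b‖_q^q + ‖Ex‖⋆. If x and x' are both minimizers of (P₂), then Ax = Ax' and ‖Ex‖⋆ = ‖Ex'‖⋆. -/
/-!
The data-fit term `y ↦ ½ ∑ |yᵢ - bᵢ|^q` is strictly convex because `t ↦ |t|^q` is, and the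
penalty `x ↦ ‖Ex‖⋆` is a seminorm composed with a linear map, hence convex. If two minimizers
had `Ax ≠ Ax'`, their midpoint would lie in the convex set `C` and have strictly smaller
objective value. Once `Ax = Ax'`, equality of the two optimal values forces `‖Ex‖⋆ = ‖Ex'‖⋆`.
-/

open Set

lemma strictConvexOn_abs_rpow {p : ℝ} (hp : 1 < p) :
    StrictConvexOn ℝ univ fun t : ℝ => |t| ^ p := by
  refine ⟨convex_univ, fun x _ y _ hxy a b ha hb hab => ?_⟩
  simp only [smul_eq_mul]
  by_cases habs : |x| = |y|
  · obtain rfl : x = -y := (abs_eq_abs.1 habs).resolve_left hxy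
    have hy : 0 < |y| := abs_pos.2 fun h => hxy (by simp [h])
    have hcancel : |a * -y + b * y| < |y| := by
      rw [show a * -y + b * y = (b - a) * y by ring, abs_mul]
      exact mul_lt_of_lt_one_left hy (abs_sub_lt_iff.2 ⟨by linarith, by linarith⟩)
    calc |a * -y + b * y| ^ p < |y| ^ p := Real.rpow_lt_rpow (abs_nonneg _) hcancel (by linarith)
      _ = a * |-y| ^ p + b * |y| ^ p := by rw [abs_neg, ← add_mul, hab, one_mul]
  · have htri : |a * x + b * y| ≤ a * |x| + b * |y| := by
      simpa [abs_mul, abs_of_pos ha, abs_of_pos hb] using abs_add_le (a * x) (b * y)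
    calc |a * x + b * y| ^ p ≤ (a * |x| + b * |y|) ^ p :=
          Real.rpow_le_rpow (abs_nonneg _) htri (by linarith)
      _ < a * |x| ^ p + b * |y| ^ p :=
          (strictConvexOn_rpow hp).2 (abs_nonneg x) (abs_nonneg y) habs ha hb hab

lemma strictConvexOn_univ_sum_apply {ι : Type*} [Fintype ι] {f : ι → ℝ → ℝ}
    (hf : ∀ i, StrictConvexOn ℝ univ (f i)) :
    StrictConvexOn ℝ univ fun y : ι → ℝ => ∑ i, f i (y i) := by
  refine ⟨convex_univ, fun x _ y _ hxy a b ha hb hab => ?_⟩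
  obtain ⟨j, hj⟩ := Function.ne_iff.1 hxy
  simp only [smul_eq_mul, Finset.mul_sum, ← Finset.sum_add_distrib, Pi.add_apply, Pi.smul_apply]
  exact Finset.sum_lt_sum (fun i _ => (hf i).convexOn.2 trivial trivial ha.le hb.le hab)
    ⟨j, Finset.mem_univ j, (hf j).2 trivial trivial hj ha hb hab⟩

theorem StrictConvexOn.smul {𝕜 E β : Type*} [CommSemiring 𝕜] [PartialOrder 𝕜] [AddCommMonoid E]
    [SMul 𝕜 E] [AddCommMonoid β] [PartialOrder β] [Module 𝕜 β] [PosSMulStrictMono 𝕜 β]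
    {s : Set E} {f : E → β} {c : 𝕜} (hc : 0 < c) (hf : StrictConvexOn 𝕜 s f) :
    StrictConvexOn 𝕜 s fun x => c • f x :=
  ⟨hf.1, fun x hx y hy hxy a b ha hb hab =>
    calc c • f (a • x + b • y) < c • (a • f x + b • f y) :=
          smul_lt_smul_of_pos_left (hf.2 hx hy hxy ha hb hab) hc
      _ = a • c • f x + b • c • f y := by rw [smul_add, smul_comm c, smul_comm c]⟩

theorem StrictConvexOn.map_eq_of_isMinOn_comp_add {𝕜 E F β : Type*} [Field 𝕜] [LinearOrder 𝕜]
    [IsStrictOrderedRing 𝕜] [AddCommGroup E] [Module 𝕜 E] [AddCommGroup F] [Module 𝕜 F]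
    [AddCommMonoid β] [PartialOrder β] [IsOrderedCancelAddMonoid β] [Module 𝕜 β]
    [PosSMulMono 𝕜 β] {s : Set E} {g : F → β} {h : E → β} {L : E →ₗ[𝕜] F} {x y : E} (hg : StrictConvexOn 𝕜 (L '' s) g)
    (hh : ConvexOn 𝕜 s h) (hfx : IsMinOn (fun z => g (L z) + h z) s x)
    (hfy : IsMinOn (fun z => g (L z) + h z) s y) (hx : x ∈ s) (hy : y ∈ s) : L x = L y := by
  by_contra hxy
  set z := (2 : 𝕜)⁻¹ • x + (2 : 𝕜)⁻¹ • y
  have hz : z ∈ s := hh.1 hx hy (by norm_num) (by norm_num) (by norm_num)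
  refine lt_irrefl (g (L z) + h z) ?_
  calc g (L z) + h z
      < ((2 : 𝕜)⁻¹ • g (L x) + (2 : 𝕜)⁻¹ • g (L y)) + ((2 : 𝕜)⁻¹ • h x + (2 : 𝕜)⁻¹ • h y) := by
        refine add_lt_add_of_lt_of_le ?_ (hh.2 hx hy (by norm_num) (by norm_num) (by norm_num))
        rw [map_add, map_smul, map_smul]
        exact hg.2 (mem_image_of_mem L hx) (mem_image_of_mem L hy) hxy (by norm_num) (by norm_num)
          (by norm_num)
    _ = (2 : 𝕜)⁻¹ • (g (L x) + h x) + (2 : 𝕜)⁻¹ • (g (L y) + h y) := by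
        rw [smul_add, smul_add, add_add_add_comm]
    _ ≤ (2 : 𝕜)⁻¹ • (g (L z) + h z) + (2 : 𝕜)⁻¹ • (g (L z) + h z) := by
        gcongr (2 : 𝕜)⁻¹ • ?_ + (2 : 𝕜)⁻¹ • ?_; exacts [hfx hz, hfy hz]
    _ = g (L z) + h z := by rw [← add_smul]; norm_num

theorem stmt4_general {m N r ℓ : ℕ} (q : ℝ) (hq : 1 < q)
    (A : Matrix (Fin m) (Fin N) ℝ) (b : Fin m → ℝ) (E : Matrix (Fin r) (Fin N) ℝ)
    (Cm : Matrix (Fin ℓ) (Fin N) ℝ) (d : Fin ℓ → ℝ)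
    (nstar : (Fin r → ℝ) → ℝ)
    (hns1 : ∀ u v, nstar (u + v) ≤ nstar u + nstar v)
    (hns2 : ∀ (c : ℝ) u, nstar (c • u) = |c| * nstar u)
    (𝒞 : Set (Fin N → ℝ)) (h𝒞 : 𝒞 = {x | ∀ i, Cm.mulVec x i ≤ d i})
    (J : (Fin N → ℝ) → ℝ)
    (hJ : J = fun x => (1/2) * (∑ i, |A.mulVec x i - b i| ^ q) + nstar (E.mulVec x))
    (x x' : Fin N → ℝ) (hx : x ∈ 𝒞) (hx' : x' ∈ 𝒞)
    (hxm : ∀ y ∈ 𝒞, J x ≤ J y) (hx'm : ∀ y ∈ 𝒞, J x' ≤ J y) :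
    A.mulVec x = A.mulVec x' ∧ nstar (E.mulVec x) = nstar (E.mulVec x') := by
  have hconv : Convex ℝ 𝒞 := by
    rw [h𝒞, ofPred_forall]
    exact convex_iInter fun i => convex_halfSpace_le (LinearMap.proj i ∘ₗ Cm.mulVecLin).isLinear (d i)
  have hg : StrictConvexOn ℝ univ fun y : Fin m → ℝ => (1 / 2 : ℝ) • ∑ i, |y i - b i| ^ q :=
    (strictConvexOn_univ_sum_apply fun i => by
      simpa [sub_eq_add_neg] using (strictConvexOn_abs_rpow hq).translate_left (-b i)).smul
      (by norm_num)
  have hh : ConvexOn ℝ univ fun x => nstar (E.mulVec x) :=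
    (Seminorm.of nstar hns1 fun c u => by rw [Real.norm_eq_abs]; exact hns2 c u).convexOn.comp_linearMap E.mulVecLin
  subst hJ
  have hA : A.mulVec x = A.mulVec x' :=
    (hg.subset (subset_univ _) (hconv.linear_image A.mulVecLin)).map_eq_of_isMinOn_comp_add
      (hh.subset (subset_univ _) hconv) (isMinOn_iff.2 hxm) (isMinOn_iff.2 hx'm) hx hx'
  refine ⟨hA, ?_⟩
  have hJ_eq := le_antisymm (hxm x' hx') (hx'm x hx)
  simp only [hA] at hJ_eq
  linarith

/-- For the problem (P₂): min over the polyhedral set 𝒞 of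
`(1/2)‖Ax − b‖_q^q + ‖Ex‖⋆` with `q > 1`, any two minimizers `x, x'` satisfy
`Ax = Ax'` and `‖Ex‖⋆ = ‖Ex'‖⋆`. -/
theorem stmt4 {m N r ℓ : ℕ} (q : ℝ) (hq : 1 < q)
    (A : Matrix (Fin m) (Fin N) ℝ) (b : Fin m → ℝ) (E : Matrix (Fin r) (Fin N) ℝ)
    (Cm : Matrix (Fin ℓ) (Fin N) ℝ) (d : Fin ℓ → ℝ)
    (nstar : (Fin r → ℝ) → ℝ)
    (hns1 : ∀ u v, nstar (u + v) ≤ nstar u + nstar v)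
    (hns2 : ∀ (c : ℝ) u, nstar (c • u) = |c| * nstar u)
    (hns3 : ∀ u, nstar u = 0 → u = 0)
    (𝒞 : Set (Fin N → ℝ)) (h𝒞 : 𝒞 = {x | ∀ i, Cm.mulVec x i ≤ d i})
    (J : (Fin N → ℝ) → ℝ)
    (hJ : J = fun x => (1/2) * (∑ i, |A.mulVec x i - b i| ^ q) + nstar (E.mulVec x))
    (x x' : Fin N → ℝ) (hx : x ∈ 𝒞) (hx' : x' ∈ 𝒞)
    (hxm : ∀ y ∈ 𝒞, J x ≤ J y) (hx'm : ∀ y ∈ 𝒞, J x' ≤ J y) :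
    A.mulVec x = A.mulVec x' ∧ nstar (E.mulVec x) = nstar (E.mulVec x') :=
  stmt4_general q hq A b E Cm d nstar hns1 hns2 𝒞 h𝒞 J hJ x x' hx hx' hxm hx'm
end

section
/- Let P be a polyhedral set in ℝ^N, f : ℝ^N → ℝ a convex piecewise affine function (i.e. f(x) = max_{i=1..ℓ}(p_iᵀx + γ_i)) such that min_{x∈P} f(x) has a nonempty solution set, and h : ℝ^N → ℝ a coercive convex function. Then there exists ε̄ > 0 such that for every ε ∈ (0, ε̄], every minimizer of min_{x∈P} f(x) + ε h(x) is a minimizer of min_{x∈P} f(x) (exact regularization). -/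
/-!
On `P`, the piecewise affine `f` has a weak sharp minimum: `f x ≥ f* + α · dist(x, S)` for the
solution set `S`. To see this, project `x` onto the polyhedron `S` at `s`; the normal `x - s` lies
in the polar of the tangent cone of `S` at `s`, and a compactness argument on the unit sphere gives
an active piece `i` with `⟪p i, x - s⟫ ≥ α ‖x - s‖`, where `α` depends only on the active index
sets, of which there are finitely many.
A minimizer `x` of `f + ε h` has `h x ≤ h x̄`, so by coercivity `x` and its projection `s` stay in a
fixed ball on which the convex `h` is `K`-Lipschitz. Comparing `x` with `s` then gives
`α · dist(x, S) ≤ ε K · dist(x, S)`, which forces `x ∈ S` as soon as `ε < α / K`.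
-/

open Set Filter Metric Bornology Topology
open scoped RealInnerProductSpace

lemma IsCompact.exists_pos_forall_exists_le {X ι : Type*} [TopologicalSpace X] {Z : Set X}
    (hZ : IsCompact Z) {I : Finset ι} {g : ι → X → ℝ} (hg : ∀ i ∈ I, Continuous (g i))
    (hpos : ∀ u ∈ Z, ∃ i ∈ I, 0 < g i u) : ∃ a > 0, ∀ u ∈ Z, ∃ i ∈ I, a ≤ g i u := by
  rcases Z.eq_empty_or_nonempty with rfl | hZ₀
  · exact ⟨1, one_pos, by simp⟩
  obtain ⟨i₀, hi₀, -⟩ := hpos _ hZ₀.some_mem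
  have hI : I.Nonempty := ⟨i₀, hi₀⟩
  obtain ⟨u₀, hu₀, hmin⟩ := hZ.exists_isMinOn hZ₀
    (Continuous.finset_sup'_apply hI hg).continuousOn
  refine ⟨I.sup' hI fun i => g i u₀, (Finset.lt_sup'_iff hI).2 (hpos u₀ hu₀), fun u hu => ?_⟩
  exact (Finset.le_sup'_iff hI).1 (hmin hu)

variable {E : Type*} [NormedAddCommGroup E] [InnerProductSpace ℝ E]

section Polyhedron

variable {κ : Type*}

def polyhedron (a : κ → E) (b : κ → ℝ) : Set E := {x | ∀ k, ⟪a k, x⟫ ≤ b k}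

lemma isClosed_polyhedron (a : κ → E) (b : κ → ℝ) : IsClosed (polyhedron a b) := by
  simp only [polyhedron, ofPred_forall]
  exact isClosed_iInter fun k => isClosed_le (continuous_const.inner continuous_id) continuous_const

lemma convex_polyhedron (a : κ → E) (b : κ → ℝ) : Convex ℝ (polyhedron a b) := by
  simp only [polyhedron, ofPred_forall]
  exact convex_iInter fun k => convex_halfSpace_le (innerₛₗ ℝ (a k)).isLinear (b k)

lemma eventually_add_smul_mem_polyhedron [Finite κ] {a : κ → E} {b : κ → ℝ} {x v : E}
    (hx : x ∈ polyhedron a b) (hv : ∀ k, ⟪a k, x⟫ = b k → ⟪a k, v⟫ ≤ 0) :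
    ∀ᶠ t in 𝓝[>] (0 : ℝ), x + t • v ∈ polyhedron a b := by
  refine eventually_all.2 fun k => ?_
  simp only [inner_add_right, real_inner_smul_right]
  rcases (hx k).eq_or_lt with hk | hk
  · filter_upwards [self_mem_nhdsWithin] with t (ht : 0 < t)
    nlinarith [hv k hk]
  · have : Tendsto (fun t : ℝ => ⟪a k, x⟫ + t * ⟪a k, v⟫) (𝓝 0) (𝓝 ⟪a k, x⟫) :=
      (by fun_prop : Continuous fun t : ℝ => ⟪a k, x⟫ + t * ⟪a k, v⟫).tendsto' 0 _ (by simp)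
    exact (this.eventually (ge_mem_nhds hk)).filter_mono nhdsWithin_le_nhds

end Polyhedron

lemma inner_sub_le_zero_of_infDist_eq_dist {S : Set E} (hS : Convex ℝ S) {x s v : E}
    (hs : s ∈ S) (hxs : infDist x S = dist x s) {t : ℝ} (ht : 0 < t) (hst : s + t • v ∈ S) :
    ⟪x - s, v⟫ ≤ 0 := by
  have hproj : ‖x - s‖ = ⨅ w : S, ‖x - w‖ := by
    simpa only [infDist_eq_iInf, dist_eq_norm] using hxs.symm
  have := (norm_eq_iInf_iff_real_inner_le_zero hS hs).1 hproj _ hst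
  rw [add_sub_cancel_left, real_inner_smul_right] at this
  exact nonpos_of_mul_nonpos_right this ht

lemma exists_pos_mul_norm_le_inner_of_mem_polar [ProperSpace E] {ι κ : Type*}
    (c : κ → E) (q : ι → E) (J : Finset κ) (I : Finset ι) :
    ∃ a > 0, ∀ u ≠ 0, (∀ j ∈ J, ⟪c j, u⟫ ≤ 0) →
      (∀ v, (∀ j ∈ J, ⟪c j, v⟫ ≤ 0) → (∀ i ∈ I, ⟪q i, v⟫ ≤ 0) → ⟪u, v⟫ ≤ 0) →
      ∃ i ∈ I, a * ‖u‖ ≤ ⟪q i, u⟫ := by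
  let Z : Set E := sphere 0 1 ∩ {u | (∀ j ∈ J, ⟪c j, u⟫ ≤ 0) ∧
    ∀ v, (∀ j ∈ J, ⟪c j, v⟫ ≤ 0) → (∀ i ∈ I, ⟪q i, v⟫ ≤ 0) → ⟪u, v⟫ ≤ 0}
  have hZ : IsCompact Z := by
    refine (isCompact_sphere 0 1).inter_right ?_
    simp only [ofPred_and, ofPred_forall]
    exact (isClosed_iInter fun j => isClosed_iInter fun _ =>
      isClosed_le (continuous_const.inner continuous_id) continuous_const).inter
      (isClosed_iInter fun v => isClosed_iInter fun _ => isClosed_iInter fun _ =>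
        isClosed_le (continuous_id.inner continuous_const) continuous_const)
  have hpos : ∀ u ∈ Z, ∃ i ∈ I, 0 < ⟪q i, u⟫ := by
    rintro u ⟨hu, hcone, hpolar⟩
    by_contra! hneg
    have : u = 0 := real_inner_self_nonpos.1 (hpolar u hcone hneg)
    simp [this] at hu
  obtain ⟨a, ha, hZa⟩ := hZ.exists_pos_forall_exists_le (g := fun i u => ⟪q i, u⟫)
    (fun i _ => continuous_const.inner continuous_id) hpos
  refine ⟨a, ha, fun u hu hcone hpolar => ?_⟩
  have hnorm : 0 < ‖u‖ := norm_pos_iff.2 hu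
  have hmem : ‖u‖⁻¹ • u ∈ Z := by
    refine ⟨by simp [norm_smul, hnorm.ne'], fun j hj => ?_, fun v hcv hqv => ?_⟩
    · rw [real_inner_smul_right]
      exact mul_nonpos_of_nonneg_of_nonpos (by positivity) (hcone j hj)
    · rw [real_inner_smul_left]
      exact mul_nonpos_of_nonneg_of_nonpos (by positivity) (hpolar v hcv hqv)
  obtain ⟨i, hi, hai⟩ := hZa _ hmem
  rw [real_inner_smul_right, le_inv_mul_iff₀ hnorm] at hai
  exact ⟨i, hi, by linarith⟩

section MaxAffine

variable {ι κ : Type*} [Fintype ι] [Nonempty ι]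

def maxAffine (q : ι → E) (γ : ι → ℝ) (x : E) : ℝ :=
  Finset.univ.sup' Finset.univ_nonempty fun i => ⟪q i, x⟫ + γ i

lemma continuous_maxAffine (q : ι → E) (γ : ι → ℝ) : Continuous (maxAffine q γ) :=
  Continuous.finset_sup'_apply _ fun _ _ =>
    (continuous_const.inner continuous_id).add continuous_const

lemma le_maxAffine (q : ι → E) (γ : ι → ℝ) (x : E) (i : ι) : ⟪q i, x⟫ + γ i ≤ maxAffine q γ x :=
  Finset.le_sup' (fun i => ⟪q i, x⟫ + γ i) (Finset.mem_univ i)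

lemma sep_maxAffine_le_eq_polyhedron (c : κ → E) (d : κ → ℝ) (q : ι → E) (γ : ι → ℝ) (t : ℝ) :
    {x ∈ polyhedron c d | maxAffine q γ x ≤ t} =
      polyhedron (Sum.elim c q) (Sum.elim d fun i => t - γ i) := by
  ext x
  simp only [polyhedron, maxAffine, Finset.sup'_le_iff, Finset.mem_univ, true_implies,
    mem_ofPred_eq, Sum.forall, Sum.elim_inl, Sum.elim_inr, le_sub_iff_add_le]

variable [Fintype κ] [FiniteDimensional ℝ E]

theorem exists_pos_maxAffine_add_mul_infDist_le (c : κ → E) (d : κ → ℝ) (q : ι → E) (γ : ι → ℝ)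
    {xb : E} (hxb : xb ∈ polyhedron c d)
    (hmin : ∀ y ∈ polyhedron c d, maxAffine q γ xb ≤ maxAffine q γ y) :
    ∃ α > 0, ∀ x ∈ polyhedron c d, maxAffine q γ xb +
      α * infDist x {y ∈ polyhedron c d | maxAffine q γ y ≤ maxAffine q γ xb} ≤
        maxAffine q γ x := by
  choose a ha hpattern using fun JI : Finset κ × Finset ι =>
    exists_pos_mul_norm_le_inner_of_mem_polar c q JI.1 JI.2
  obtain ⟨JI₀, hJI₀⟩ := Finite.exists_min a
  refine ⟨a JI₀, ha JI₀, fun x hx => ?_⟩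
  set t := maxAffine q γ xb
  have hxbS : xb ∈ polyhedron (Sum.elim c q) (Sum.elim d fun i => t - γ i) := by
    rw [← sep_maxAffine_le_eq_polyhedron]
    exact ⟨hxb, le_rfl⟩
  rw [sep_maxAffine_le_eq_polyhedron]
  set S := polyhedron (Sum.elim c q) (Sum.elim d fun i => t - γ i)
  obtain ⟨s, hsS, hxs⟩ := (isClosed_polyhedron _ _).exists_infDist_eq_dist ⟨xb, hxbS⟩ x
  rcases eq_or_ne x s with rfl | hne
  · rw [hxs, dist_self, mul_zero, add_zero]
    exact hmin x hx
  classical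
  let J := Finset.univ.filter fun j => ⟪c j, s⟫ = d j
  let I := Finset.univ.filter fun i => ⟪q i, s⟫ = t - γ i
  have hcone : ∀ j ∈ J, ⟪c j, x - s⟫ ≤ 0 := by
    intro j hj
    rw [inner_sub_right, (Finset.mem_filter.1 hj).2, sub_nonpos]
    exact hx j
  have hpolar : ∀ v, (∀ j ∈ J, ⟪c j, v⟫ ≤ 0) → (∀ i ∈ I, ⟪q i, v⟫ ≤ 0) → ⟪x - s, v⟫ ≤ 0 := by
    intro v hcv hqv
    have hactive : ∀ k, ⟪Sum.elim c q k, s⟫ = Sum.elim d (fun i => t - γ i) k →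
        ⟪Sum.elim c q k, v⟫ ≤ 0 := by
      rintro (j | i) hk
      · exact hcv j (Finset.mem_filter.2 ⟨Finset.mem_univ j, hk⟩)
      · exact hqv i (Finset.mem_filter.2 ⟨Finset.mem_univ i, hk⟩)
    obtain ⟨τ, hSτ, hτ⟩ :=
      ((eventually_add_smul_mem_polyhedron hsS hactive).and self_mem_nhdsWithin).exists
    exact inner_sub_le_zero_of_infDist_eq_dist (convex_polyhedron _ _) hsS hxs hτ hSτ
  obtain ⟨i, hi, hai⟩ := hpattern (J, I) (x - s) (sub_ne_zero.2 hne) hcone hpolar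
  calc t + a JI₀ * infDist x S ≤ ⟪q i, s⟫ + γ i + a (J, I) * ‖x - s‖ := by
        rw [hxs, dist_eq_norm, (Finset.mem_filter.1 hi).2, sub_add_cancel]
        gcongr
        exact hJI₀ (J, I)
    _ ≤ ⟪q i, s⟫ + γ i + ⟪q i, x - s⟫ := by gcongr
    _ = ⟪q i, x⟫ + γ i := by rw [inner_sub_right]; ring
    _ ≤ maxAffine q γ x := le_maxAffine q γ x i

end MaxAffine

theorem exists_exact_regularization_of_sharp_min {V : Type*} [NormedAddCommGroup V]
    [NormedSpace ℝ V] [FiniteDimensional ℝ V] {P : Set V} {F h : V → ℝ} {xb : V} {α : ℝ}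
    (hP : IsClosed P) (hF : Continuous F) (hxb : xb ∈ P) (hα : 0 < α)
    (hsharp : ∀ x ∈ P, F xb + α * infDist x {y ∈ P | F y ≤ F xb} ≤ F x)
    (hh : ConvexOn ℝ univ h) (hcoer : Tendsto h (cobounded V) atTop) :
    ∃ εbar > 0, ∀ ε, 0 < ε → ε ≤ εbar → ∀ x ∈ P,
      (∀ y ∈ P, F x + ε * h x ≤ F y + ε * h y) → ∀ y ∈ P, F x ≤ F y := by
  set S := {y ∈ P | F y ≤ F xb}
  have hmin : ∀ y ∈ P, F xb ≤ F y := fun y hy =>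
    le_of_add_le_of_nonneg_left (hsharp y hy) (mul_nonneg hα.le infDist_nonneg)
  obtain ⟨R, -, hR⟩ :=
    hasBasis_cobounded_norm.eventually_iff.1 (hcoer.eventually_gt_atTop (h xb))
  obtain ⟨K, hK⟩ := hh.locallyLipschitz.locallyLipschitzOn.exists_lipschitzOnWith_of_compact
    (isCompact_closedBall (0 : V) (2 * R + ‖xb‖))
  refine ⟨α / (K + 1), by positivity, fun ε hε hεle x hx hxmin y hy => ?_⟩
  have hhx : h x ≤ h xb :=
    le_of_mul_le_mul_left (by linarith [hxmin xb hxb, hmin x hx]) hε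
  have hxR : ‖x‖ ≤ R := by
    by_contra! hxR
    exact (hR hxR.le).not_ge hhx
  have hS : IsClosed S := hP.inter (isClosed_le hF continuous_const)
  obtain ⟨s, ⟨hsP, hsF⟩, hxs⟩ := hS.exists_infDist_eq_dist ⟨xb, hxb, le_rfl⟩ x
  have hxs_le : dist x s ≤ ‖x‖ + ‖xb‖ := by
    rw [← hxs]
    exact (infDist_le_dist_of_mem (s := S) ⟨hxb, le_rfl⟩).trans (dist_le_norm_add_norm x xb)
  have hx_mem : x ∈ closedBall (0 : V) (2 * R + ‖xb‖) := by
    rw [mem_closedBall_zero_iff]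
    linarith [norm_nonneg x, norm_nonneg xb]
  have hs_mem : s ∈ closedBall (0 : V) (2 * R + ‖xb‖) := by
    rw [mem_closedBall_zero_iff]
    linarith [norm_le_norm_add_norm_sub' s x, dist_eq_norm' x s]
  have hlip : h s - h x ≤ K * dist x s := by
    rw [dist_comm]
    exact (le_abs_self _).trans (hK.dist_le_mul s hs_mem x hx_mem)
  have hεK : ε * K < α := by
    calc ε * K ≤ α / (K + 1) * K := by gcongr
      _ < α := by rw [div_mul_eq_mul_div, div_lt_iff₀ (by positivity)]; linarith
  have hgap : (α - ε * K) * dist x s ≤ 0 := by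
    have hFx : F xb + α * dist x s ≤ F x := hxs ▸ hsharp x hx
    have hFs : F x + ε * h x ≤ F s + ε * h s := hxmin s hsP
    nlinarith [mul_le_mul_of_nonneg_left hlip hε.le]
  have hxs_eq : x = s :=
    dist_le_zero.1 (nonpos_of_mul_nonpos_right hgap (sub_pos.2 hεK))
  exact (hxs_eq ▸ hsF).trans (hmin y hy)

/-- Exact regularization of a convex piecewise affine objective over a polyhedral
set: there is `ε̄ > 0` such that for all `ε ∈ (0, ε̄]`, every minimizer of
`f + ε h` over `P` is a minimizer of `f` over `P`. -/
theorem stmt6 {N ℓc r : ℕ} (Cm : Matrix (Fin ℓc) (Fin N) ℝ) (d : Fin ℓc → ℝ)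
    (P : Set (Fin N → ℝ)) (hP : P = {x | ∀ i, Cm.mulVec x i ≤ d i})
    (p : Fin (r + 1) → Fin N → ℝ) (γ : Fin (r + 1) → ℝ)
    (f : (Fin N → ℝ) → ℝ)
    (hf : ∀ x, f x = Finset.univ.sup' Finset.univ_nonempty
      (fun i => (∑ j, p i j * x j) + γ i))
    (h : (Fin N → ℝ) → ℝ) (hhcv : ConvexOn ℝ Set.univ h)
    (hcoer : ∀ M : ℝ, ∃ R : ℝ, ∀ x, R ≤ ‖x‖ → M ≤ h x)
    (hsol : ∃ x ∈ P, ∀ y ∈ P, f x ≤ f y) :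
    ∃ εbar > (0 : ℝ), ∀ ε : ℝ, 0 < ε → ε ≤ εbar →
      ∀ x ∈ P, (∀ y ∈ P, f x + ε * h x ≤ f y + ε * h y) →
        ∀ y ∈ P, f x ≤ f y := by
  obtain ⟨xb, hxb, hmin⟩ := hsol
  let c : Fin ℓc → EuclideanSpace ℝ (Fin N) := fun j => WithLp.toLp 2 (Cm j)
  let q : Fin (r + 1) → EuclideanSpace ℝ (Fin N) := fun i => WithLp.toLp 2 (p i)
  have hPE : WithLp.ofLp ⁻¹' P = polyhedron c d := by
    ext x
    simp [hP, polyhedron, c, EuclideanSpace.inner_eq_star_dotProduct, Matrix.mulVec, dotProduct,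
      mul_comm]
  have hfE : f ∘ WithLp.ofLp = maxAffine q γ := by
    funext x
    simp [hf, maxAffine, q, EuclideanSpace.inner_eq_star_dotProduct, dotProduct, mul_comm]
  have hcoerE : Tendsto (h ∘ WithLp.ofLp) (cobounded (EuclideanSpace ℝ (Fin N))) atTop := by
    refine Tendsto.comp (tendsto_atTop.2 fun M => ?_)
      (PiLp.antilipschitzWith_ofLp 2 _).tendsto_cobounded
    obtain ⟨R, hR⟩ := hcoer M
    exact (eventually_cobounded_le_norm R).mono hR
  obtain ⟨α, hα, hsharp⟩ := exists_pos_maxAffine_add_mul_infDist_le c d q γ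
    (xb := WithLp.toLp 2 xb) (by rw [← hPE]; exact hxb)
    (by rw [← hPE, ← hfE]; exact fun y hy => hmin _ hy)
  rw [← hPE, ← hfE] at hsharp
  obtain ⟨εbar, hεbar, hreg⟩ := exists_exact_regularization_of_sharp_min
    (P := WithLp.ofLp ⁻¹' P) (xb := WithLp.toLp 2 xb) (hPE ▸ isClosed_polyhedron c d)
    (hfE ▸ continuous_maxAffine q γ) hxb hα hsharp
    (hhcv.comp_linearMap (WithLp.linearEquiv 2 ℝ (Fin N → ℝ)).toLinearMap) hcoerE
  exact ⟨εbar, hεbar, fun ε hε hεle x hx hxmin y hy =>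
    hreg ε hε hεle (WithLp.toLp 2 x) hx (fun y hy => hxmin _ hy) (WithLp.toLp 2 y) hy⟩
end

section
/- Consider (P_μ): min (1/2)‖x‖₂² + μ‖x‖₁ subject to ‖Ax − b‖₂ ≤ σ, with σ > 0, ‖b‖₂ > σ, μ ≥ 0. A feasible point x* is a minimizer of (P_μ) if and only if ‖Ax* − b‖₂ = σ and for every u ∈ ℝ^N with either Au = 0 or gᵀu < 0 (where g := Aᵀ(Ax* − b)), one has x*ᵀu + μ · max_{i ∈ I(x*)} p_iᵀu ≥ 0, where I(x*) := {i : p_iᵀx* = ‖x*‖₁} and the p_i range over the 2^N sign vectors in {−1,+1}^N realizing ‖x‖₁ = max_i p_iᵀx. -/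
/-!
Write `f` for the objective and `M(u) = max_{i ∈ I(x*)} p_iᵀu`. For small `t > 0` only the
sign vectors active at `x*` can realize `‖x* + t u‖₁`, so
`f(x* + t u) ≤ f(x*) + t (x*ᵀu + μ M(u)) + O(t²)`; conversely `‖x* + u‖₁ ≥ ‖x*‖₁ + M(u)` for
every `u`, so `f(x* + u) ≥ f(x*) + x*ᵀu + μ M(u)`. Hence `x*` is optimal iff `x*ᵀu + μ M(u) ≥ 0`
along the directions `u` that stay feasible. When `‖Ax* − b‖₂ = σ`,
`‖A(x* + t u) − b‖₂² = σ² + t (2 gᵀu + t ‖Au‖²)`, so these are exactly the `u` with `Au = 0` or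
`gᵀu < 0`, and every feasible `x` yields such a direction `u = x − x*`. The constraint must be
active at a minimizer: otherwise the direction `u = −x*` is feasible, which forces `x* = 0`,
and `0` is infeasible because `‖b‖₂ > σ`.
-/

open Matrix Filter Topology

lemma eventually_nhdsGT_add_mul_neg {a : ℝ} (c : ℝ) (ha : a < 0) :
    ∀ᶠ t in 𝓝[>] (0 : ℝ), a + t * c < 0 := by
  have : Tendsto (fun t : ℝ => a + t * c) (𝓝 0) (𝓝 a) := by
    simpa using ((continuous_mul_const c).const_add a).tendsto (0 : ℝ)
  exact nhdsWithin_le_nhds (this.eventually (gt_mem_nhds ha))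

section

variable {ι : Type*} [Fintype ι]

def signVec (ε : ι → Bool) : ι → ℝ := fun i => if ε i then 1 else -1

lemma signVec_dotProduct_le_sum_abs (ε : ι → Bool) (y : ι → ℝ) :
    signVec ε ⬝ᵥ y ≤ ∑ i, |y i| :=
  Finset.sum_le_sum fun i _ => by
    unfold signVec
    split_ifs
    · simpa using le_abs_self (y i)
    · simpa using neg_le_abs (y i)

lemma exists_signVec_dotProduct_eq_sum_abs (y : ι → ℝ) :
    ∃ ε, signVec ε ⬝ᵥ y = ∑ i, |y i| :=
  ⟨fun i => decide (0 ≤ y i), Finset.sum_congr rfl fun i _ => by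
    by_cases h : 0 ≤ y i
    · simp [signVec, h, abs_of_nonneg h]
    · simp [signVec, h, abs_of_neg (not_le.mp h)]⟩

/-- The values `p_εᵀu` over the sign vectors `ε ∈ I(x)` active at `x`. -/
def activeValues (x u : ι → ℝ) : Set ℝ :=
  {v | ∃ ε, signVec ε ⬝ᵥ x = ∑ i, |x i| ∧ v = signVec ε ⬝ᵥ u}

noncomputable def activeMax (x u : ι → ℝ) : ℝ := sSup (activeValues x u)

lemma activeValues_finite (x u : ι → ℝ) : (activeValues x u).Finite :=
  (Set.finite_range fun ε => signVec ε ⬝ᵥ u).subset fun _ ⟨ε, _, hv⟩ => ⟨ε, hv.symm⟩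

lemma exists_active_activeMax_eq (x u : ι → ℝ) :
    ∃ ε, signVec ε ⬝ᵥ x = ∑ i, |x i| ∧ activeMax x u = signVec ε ⬝ᵥ u := by
  obtain ⟨ε, hε⟩ := exists_signVec_dotProduct_eq_sum_abs x
  have hne : (activeValues x u).Nonempty := ⟨_, ε, hε, rfl⟩
  exact hne.csSup_mem (activeValues_finite x u)

lemma le_activeMax {x : ι → ℝ} (u : ι → ℝ) {ε : ι → Bool} (hε : signVec ε ⬝ᵥ x = ∑ i, |x i|) :
    signVec ε ⬝ᵥ u ≤ activeMax x u :=
  le_csSup (activeValues_finite x u).bddAbove ⟨ε, hε, rfl⟩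

lemma activeMax_neg_self (x : ι → ℝ) : activeMax x (-x) = -∑ i, |x i| := by
  obtain ⟨ε, hε, h⟩ := exists_active_activeMax_eq x (-x)
  rw [h, dotProduct_neg, hε]

lemma sum_abs_add_ge (x u : ι → ℝ) : ∑ i, |x i| + activeMax x u ≤ ∑ i, |(x + u) i| := by
  obtain ⟨ε, hε, h⟩ := exists_active_activeMax_eq x u
  rw [h, ← hε, ← dotProduct_add]
  exact signVec_dotProduct_le_sum_abs ε (x + u)

lemma eventually_sum_abs_add_smul_le (x u : ι → ℝ) :
    ∀ᶠ t in 𝓝[>] (0 : ℝ), ∑ i, |(x + t • u) i| ≤ ∑ i, |x i| + t * activeMax x u := by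
  have hε : ∀ ε : ι → Bool, ∀ᶠ t in 𝓝[>] (0 : ℝ),
      signVec ε ⬝ᵥ (x + t • u) ≤ ∑ i, |x i| + t * activeMax x u := by
    intro ε
    simp only [dotProduct_add, dotProduct_smul, smul_eq_mul]
    by_cases hact : signVec ε ⬝ᵥ x = ∑ i, |x i|
    · filter_upwards [self_mem_nhdsWithin] with t (ht : 0 < t)
      rw [hact]
      gcongr
      exact le_activeMax u hact
    · have hlt := lt_of_le_of_ne (signVec_dotProduct_le_sum_abs ε x) hact
      filter_upwards [eventually_nhdsGT_add_mul_neg (signVec ε ⬝ᵥ u - activeMax x u)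
        (sub_neg.mpr hlt)] with t ht
      linarith
  filter_upwards [eventually_all.mpr hε] with t ht
  obtain ⟨ε, hε⟩ := exists_signVec_dotProduct_eq_sum_abs (x + t • u)
  exact hε ▸ ht ε

lemma sum_sq_add_smul (r s : ι → ℝ) (t : ℝ) :
    ∑ i, (r + t • s) i ^ 2 = ∑ i, r i ^ 2 + 2 * t * (r ⬝ᵥ s) + t ^ 2 * ∑ i, s i ^ 2 := by
  simp only [dotProduct, Pi.add_apply, Pi.smul_apply, smul_eq_mul, Finset.mul_sum,
    ← Finset.sum_add_distrib]
  exact Finset.sum_congr rfl fun i _ => by ring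

noncomputable def objective (μ : ℝ) (x : ι → ℝ) : ℝ := 1 / 2 * ∑ i, x i ^ 2 + μ * ∑ i, |x i|

variable {μ : ℝ}

lemma eventually_objective_add_smul_le (hμ : 0 ≤ μ) (x u : ι → ℝ) :
    ∀ᶠ t in 𝓝[>] (0 : ℝ), objective μ (x + t • u) ≤
      objective μ x + t * (x ⬝ᵥ u + μ * activeMax x u) + t ^ 2 / 2 * ∑ i, u i ^ 2 := by
  filter_upwards [eventually_sum_abs_add_smul_le x u] with t ht
  have := mul_le_mul_of_nonneg_left ht hμ
  rw [objective, objective, sum_sq_add_smul]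
  linarith

lemma objective_add_ge (hμ : 0 ≤ μ) (x u : ι → ℝ) :
    objective μ x + (x ⬝ᵥ u + μ * activeMax x u) ≤ objective μ (x + u) := by
  have habs := mul_le_mul_of_nonneg_left (sum_abs_add_ge x u) hμ
  have hsq := sum_sq_add_smul x u 1
  rw [one_smul] at hsq
  have : 0 ≤ ∑ i, u i ^ 2 := by positivity
  rw [objective, objective, hsq]
  linarith

lemma dotProduct_add_activeMax_nonneg_of_isMinOn {S : Set (ι → ℝ)} {x u : ι → ℝ} (hμ : 0 ≤ μ)
    (hmin : IsMinOn (objective μ) S x) (hu : ∀ᶠ t in 𝓝[>] (0 : ℝ), x + t • u ∈ S) :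
    0 ≤ x ⬝ᵥ u + μ * activeMax x u := by
  by_contra! h
  obtain ⟨t, hS, hle, ht, hneg⟩ := (hu.and <| (eventually_objective_add_smul_le hμ x u).and <|
    eventually_mem_nhdsWithin.and <| eventually_nhdsGT_add_mul_neg ((∑ i, u i ^ 2) / 2) h).exists
  have := mul_neg_of_pos_of_neg (show 0 < t from ht) hneg
  have := isMinOn_iff.mp hmin _ hS
  nlinarith

variable {κ : Type*} [Fintype κ]

noncomputable def residualNorm (A : Matrix κ ι ℝ) (b : κ → ℝ) (x : ι → ℝ) : ℝ :=
  √(∑ i, (A *ᵥ x - b) i ^ 2)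

variable {A : Matrix κ ι ℝ} {b : κ → ℝ} {σ : ℝ}

lemma continuous_residualNorm : Continuous (residualNorm A b) := by
  unfold residualNorm
  fun_prop

lemma residual_sq_add_smul (A : Matrix κ ι ℝ) (b : κ → ℝ) (x u : ι → ℝ) (t : ℝ) :
    ∑ i, (A *ᵥ (x + t • u) - b) i ^ 2 = ∑ i, (A *ᵥ x - b) i ^ 2 +
      t * (2 * ((Aᵀ *ᵥ (A *ᵥ x - b)) ⬝ᵥ u) + t * ∑ i, (A *ᵥ u) i ^ 2) := by
  rw [mulVec_add, mulVec_smul, add_sub_right_comm, sum_sq_add_smul, mulVec_transpose,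
    ← dotProduct_mulVec]
  ring

lemma eventually_residualNorm_add_smul_le {x u : ι → ℝ} (hσ : 0 ≤ σ)
    (hx : residualNorm A b x = σ) (hu : A *ᵥ u = 0 ∨ (Aᵀ *ᵥ (A *ᵥ x - b)) ⬝ᵥ u < 0) :
    ∀ᶠ t in 𝓝[>] (0 : ℝ), residualNorm A b (x + t • u) ≤ σ := by
  rw [residualNorm, Real.sqrt_eq_iff_eq_sq (by positivity) hσ] at hx
  suffices h : ∀ᶠ t in 𝓝[>] (0 : ℝ),
      t * (2 * ((Aᵀ *ᵥ (A *ᵥ x - b)) ⬝ᵥ u) + t * ∑ i, (A *ᵥ u) i ^ 2) ≤ 0 by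
    filter_upwards [h] with t ht
    rw [residualNorm, Real.sqrt_le_left hσ, residual_sq_add_smul, hx]
    linarith
  rcases hu with hAu | hg
  · have hg : (Aᵀ *ᵥ (A *ᵥ x - b)) ⬝ᵥ u = 0 := by
      rw [mulVec_transpose, ← dotProduct_mulVec, hAu, dotProduct_zero]
    simp [hg, hAu]
  · filter_upwards [eventually_mem_nhdsWithin,
      eventually_nhdsGT_add_mul_neg (∑ i, (A *ᵥ u) i ^ 2) (by linarith : 2 * _ < (0 : ℝ))]
      with t (ht : 0 < t) hneg
    exact mul_nonpos_of_nonneg_of_nonpos ht.le hneg.le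

lemma residualNorm_eq_of_isMinOn {x : ι → ℝ} (hμ : 0 ≤ μ) (hb : σ < residualNorm A b 0)
    (hx : residualNorm A b x ≤ σ) (hmin : IsMinOn (objective μ) {y | residualNorm A b y ≤ σ} x) :
    residualNorm A b x = σ := by
  refine hx.eq_of_not_lt fun hlt => ?_
  have hcont : Continuous fun t : ℝ => residualNorm A b (x + t • -x) :=
    continuous_residualNorm.comp (by fun_prop)
  have h0 : residualNorm A b (x + (0 : ℝ) • -x) < σ := by simpa using hlt
  have hfeas : ∀ᶠ t in 𝓝[>] (0 : ℝ), x + t • -x ∈ {y | residualNorm A b y ≤ σ} :=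
    nhdsWithin_le_nhds <| (hcont.tendsto 0).eventually (ge_mem_nhds h0)
  have h := dotProduct_add_activeMax_nonneg_of_isMinOn hμ hmin hfeas
  rw [activeMax_neg_self, dotProduct_neg] at h
  have hx0 : x ⬝ᵥ x = 0 := by
    have : 0 ≤ x ⬝ᵥ x := Finset.sum_nonneg fun i _ => mul_self_nonneg (x i)
    have : 0 ≤ μ * ∑ i, |x i| := by positivity
    linarith
  rw [dotProduct_self_eq_zero.mp hx0] at hx
  exact hx.not_gt hb

lemma isMinOn_objective_of_residualNorm_eq {x : ι → ℝ} (hμ : 0 ≤ μ) (hσ : 0 ≤ σ)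
    (hx : residualNorm A b x = σ)
    (h : ∀ u, (A *ᵥ u = 0 ∨ (Aᵀ *ᵥ (A *ᵥ x - b)) ⬝ᵥ u < 0) → 0 ≤ x ⬝ᵥ u + μ * activeMax x u) :
    IsMinOn (objective μ) {y | residualNorm A b y ≤ σ} x := by
  rw [isMinOn_iff]
  intro y hy
  obtain ⟨u, rfl⟩ : ∃ u, y = x + u := ⟨y - x, by abel⟩
  rw [residualNorm, Real.sqrt_eq_iff_eq_sq (by positivity) hσ] at hx
  have hres := residual_sq_add_smul A b x u 1
  rw [one_smul, one_mul] at hres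
  change residualNorm A b (x + u) ≤ σ at hy
  rw [residualNorm, Real.sqrt_le_left hσ, hres, hx] at hy
  have hu : A *ᵥ u = 0 ∨ (Aᵀ *ᵥ (A *ᵥ x - b)) ⬝ᵥ u < 0 := by
    refine (lt_or_ge _ 0).symm.imp_left fun hg => ?_
    have hQ : ∑ i, (A *ᵥ u) i ^ 2 = 0 := le_antisymm (by linarith) (by positivity)
    funext i
    exact pow_eq_zero_iff two_ne_zero |>.mp <|
      congrFun ((Fintype.sum_eq_zero_iff_of_nonneg fun _ => sq_nonneg _).mp hQ) i
  linarith [objective_add_ge hμ x u, h u hu]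

end

/-- Optimality characterization for (P_μ): min `(1/2)‖x‖₂² + μ‖x‖₁` subject to
`‖Ax − b‖₂ ≤ σ`. A feasible `xstar` is a minimizer iff `‖A xstar − b‖₂ = σ` and
for every `u` with `Au = 0` or `gᵀu < 0` (where `g = Aᵀ(A xstar − b)`), one has
`xstarᵀu + μ · max_{active sign vectors p} pᵀu ≥ 0`. Sign vectors in `{±1}^N`
are indexed by `ε : Fin N → Bool`. -/
theorem stmt9 {m N : ℕ} (A : Matrix (Fin m) (Fin N) ℝ) (b : Fin m → ℝ)
    (σ μ : ℝ) (hσ : 0 < σ) (hμ : 0 ≤ μ)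
    (hb : σ < Real.sqrt (∑ i, (b i) ^ 2))
    (p : (Fin N → Bool) → Fin N → ℝ)
    (hp : ∀ ε i, p ε i = if ε i then 1 else -1)
    (xstar : Fin N → ℝ)
    (hfeas : Real.sqrt (∑ i, (A.mulVec xstar i - b i) ^ 2) ≤ σ)
    (g : Fin N → ℝ) (hg : g = A.transpose.mulVec (A.mulVec xstar - b)) :
    (∀ x, Real.sqrt (∑ i, (A.mulVec x i - b i) ^ 2) ≤ σ →
        (1 / 2) * (∑ i, (xstar i) ^ 2) + μ * ∑ i, |xstar i| ≤
          (1 / 2) * (∑ i, (x i) ^ 2) + μ * ∑ i, |x i|) ↔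
    (Real.sqrt (∑ i, (A.mulVec xstar i - b i) ^ 2) = σ ∧
      ∀ u : Fin N → ℝ, (A.mulVec u = 0 ∨ (∑ i, g i * u i) < 0) →
        0 ≤ (∑ i, xstar i * u i) +
          μ * sSup {v : ℝ | ∃ ε, (∑ i, p ε i * xstar i) = (∑ i, |xstar i|) ∧
            v = ∑ i, p ε i * u i}) := by
  obtain rfl : p = signVec := funext fun ε => funext (hp ε)
  subst hg
  have hb0 : σ < residualNorm A b 0 := by simpa [residualNorm] using hb
  change IsMinOn (objective μ) {y | residualNorm A b y ≤ σ} xstar ↔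
    residualNorm A b xstar = σ ∧ ∀ u, (A *ᵥ u = 0 ∨ (Aᵀ *ᵥ (A *ᵥ xstar - b)) ⬝ᵥ u < 0) →
      0 ≤ xstar ⬝ᵥ u + μ * activeMax xstar u
  refine ⟨fun hmin => ?_, fun ⟨hres, h⟩ => isMinOn_objective_of_residualNorm_eq hμ hσ.le hres h⟩
  have hres := residualNorm_eq_of_isMinOn hμ hb0 hfeas hmin
  exact ⟨hres, fun u hu => dotProduct_add_activeMax_nonneg_of_isMinOn hμ hmin
    (eventually_residualNorm_add_smul_le hσ.le hres hu)⟩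
end

section
/- Consider the regularized BP-like problem min ‖Ex‖⋆ + (α/2)‖x‖₂² subject to Ax = b, Cx ≤ d, with α > 0 and b ∈ A𝒞 where 𝒞 = {x : Cx ≤ d}. Let x*(b) denote its unique minimizer. Then for any bounded set B ⊆ ℝ^m, the set {x*(b) : b ∈ A𝒞 ∩ B} is bounded. -/
/-!
If the minimizers were unbounded, compactness of the unit sphere yields a unit vector `z` and
minimizers `x` with `‖x‖ → ∞` whose directions `x / ‖x‖` tend to `z`. Since `A x = b` stays
bounded, `A z = 0`. A constraint with `(C z)ᵢ ≥ 0` is not harmed by passing from `x` to `x - z`,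
and one with `(C z)ᵢ < 0` gains slack of order `‖x‖`, so `x - z` is eventually feasible. But
`‖x - z‖² = ‖x‖² - 2⟪x, z⟫ + 1` with `⟪x, z⟫ ~ ‖x‖ → ∞`, whereas the norm term increases by
at most `‖-E z‖⋆` by subadditivity, so `x - z` has a strictly smaller objective than `x`.
-/

open Filter Topology Bornology

section Asymptotics

variable {V W : Type*} [NormedAddCommGroup V] [NormedSpace ℝ V]

theorem exists_ultrafilter_tendsto_normalize [ProperSpace V] {l : Filter V} [NeBot l]
    (hl : Tendsto norm l atTop) :
    ∃ z : V, ‖z‖ = 1 ∧ ∃ U : Ultrafilter V, ↑U ≤ l ∧ Tendsto NormedSpace.normalize U (𝓝 z) := by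
  have hsphere : ∃ᶠ x in l, NormedSpace.normalize x ∈ Metric.sphere (0 : V) 1 := by
    refine (hl.eventually_gt_atTop 0).frequently.mono fun x hx => ?_
    simpa using NormedSpace.norm_normalize (norm_pos_iff.mp hx)
  obtain ⟨z, hz, hcluster⟩ := (isCompact_sphere (0 : V) 1).exists_mapClusterPt_of_frequently hsphere
  exact ⟨z, by simpa using hz, mapClusterPt_iff_ultrafilter.mp hcluster⟩

variable {l : Filter V} {z : V}

theorem ContinuousLinearMap.tendsto_inv_norm_smul_apply [TopologicalSpace W] [AddCommMonoid W]
    [Module ℝ W] (L : V →L[ℝ] W) (hz : Tendsto NormedSpace.normalize l (𝓝 z)) :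
    Tendsto (fun x => ‖x‖⁻¹ • L x) l (𝓝 (L z)) :=
  ((L.continuous.tendsto z).comp hz).congr fun x => map_smul L _ x

variable [NormedAddCommGroup W] [NormedSpace ℝ W]

theorem ContinuousLinearMap.eq_zero_of_isBoundedUnder [NeBot l] (L : V →L[ℝ] W)
    (hl : Tendsto norm l atTop) (hz : Tendsto NormedSpace.normalize l (𝓝 z))
    (hL : IsBoundedUnder (· ≤ ·) l fun x => ‖L x‖) : L z = 0 :=
  tendsto_nhds_unique (L.tendsto_inv_norm_smul_apply hz)
    ((tendsto_inv_atTop_zero.comp hl).zero_smul_isBoundedUnder_le hL)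

theorem eventually_sub_le_of_tendsto_inv_mul {α : Type*} {l : Filter α} {r g : α → ℝ} {c t : ℝ}
    (hr : Tendsto r l atTop) (hg : Tendsto (fun a => (r a)⁻¹ * g a) l (𝓝 c))
    (hgt : ∀ᶠ a in l, g a ≤ t) : ∀ᶠ a in l, g a - c ≤ t := by
  rcases le_or_gt 0 c with hc | hc
  · exact hgt.mono fun a ha => by linarith
  -- `g a ≈ c * r a → -∞`
  have hneg : ∀ᶠ a in l, (r a)⁻¹ * g a < c / 2 := hg.eventually_lt_const (by linarith)
  have hbot : ∀ᶠ a in l, r a * (c / 2) ≤ t + c :=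
    (hr.atTop_mul_const_of_neg (by linarith)).eventually_le_atBot _
  filter_upwards [hneg, hbot, hr.eventually_gt_atTop 0] with a h1 h2 hpos
  have : g a < r a * (c / 2) := by
    rwa [inv_mul_lt_iff₀ hpos] at h1
  linarith

theorem ContinuousLinearMap.eventually_map_sub_le {ι : Type*} [Finite ι] (C : V →L[ℝ] (ι → ℝ))
    {d : ι → ℝ} (hl : Tendsto norm l atTop) (hz : Tendsto NormedSpace.normalize l (𝓝 z))
    (hC : ∀ᶠ x in l, C x ≤ d) : ∀ᶠ x in l, C (x - z) ≤ d := by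
  have hCz := C.tendsto_inv_norm_smul_apply hz
  simp only [Pi.le_def, map_sub, Pi.sub_apply, eventually_all] at hC ⊢
  intro i
  exact eventually_sub_le_of_tendsto_inv_mul hl ((continuous_apply i).tendsto _ |>.comp hCz)
    (hC i)

end Asymptotics

section InnerProduct

variable {V : Type*} [NormedAddCommGroup V] [InnerProductSpace ℝ V]

open RealInnerProductSpace

theorem tendsto_inner_atTop_of_tendsto_normalize {l : Filter V} {z : V} (hz0 : z ≠ 0)
    (hl : Tendsto norm l atTop) (hz : Tendsto NormedSpace.normalize l (𝓝 z)) :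
    Tendsto (fun x => ⟪x, z⟫) l atTop := by
  have hinner : Tendsto (fun x => ⟪NormedSpace.normalize x, z⟫) l (𝓝 (‖z‖ ^ 2)) := by
    have := hz.inner (𝕜 := ℝ) (tendsto_const_nhds (x := z))
    rwa [real_inner_self_eq_norm_sq] at this
  refine (hl.atTop_mul_pos (by positivity) hinner).congr fun x => ?_
  rw [← real_inner_smul_left, NormedSpace.norm_smul_normalize]

theorem add_half_mul_norm_sq_sub_lt {f : V → ℝ} (hf : ∀ u v, f (u + v) ≤ f u + f v) {α : ℝ}
    {x z : V} (hz : ‖z‖ = 1) (hx : f (-z) + α / 2 < α * ⟪x, z⟫) :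
    f (x - z) + α / 2 * ‖x - z‖ ^ 2 < f x + α / 2 * ‖x‖ ^ 2 := by
  have hsub : f (x - z) ≤ f x + f (-z) := by simpa [sub_eq_add_neg] using hf x (-z)
  rw [norm_sub_sq_real, hz]
  linarith

/-- The set `{x*(b) : b ∈ B}` of solutions of the regularized problem. -/
def regularizedMinimizers {W ι : Type*} [TopologicalSpace W] [AddCommMonoid W] [Module ℝ W]
    (f : V → ℝ) (α : ℝ) (A : V →L[ℝ] W) (C : V →L[ℝ] (ι → ℝ)) (d : ι → ℝ) (B : Set W) : Set V :=
  {x | ∃ b ∈ B, A x = b ∧ C x ≤ d ∧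
    ∀ y, A y = b → C y ≤ d → f x + α / 2 * ‖x‖ ^ 2 ≤ f y + α / 2 * ‖y‖ ^ 2}

theorem isBounded_regularizedMinimizers [FiniteDimensional ℝ V] {W ι : Type*}
    [NormedAddCommGroup W] [NormedSpace ℝ W] [Finite ι]
    {f : V → ℝ} (hf : ∀ u v, f (u + v) ≤ f u + f v) {α : ℝ} (hα : 0 < α)
    (A : V →L[ℝ] W) (C : V →L[ℝ] (ι → ℝ)) (d : ι → ℝ) {B : Set W} (hB : IsBounded B) :
    IsBounded (regularizedMinimizers f α A C d B) := by
  set S := regularizedMinimizers f α A C d B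
  by_contra hS
  obtain ⟨R, hR⟩ := isBounded_iff_forall_norm_le.mp hB
  have : NeBot (cobounded V ⊓ 𝓟 S) := by
    rwa [isBounded_def, mem_iff_inf_principal_compl, compl_compl, ← ne_eq, ← neBot_iff] at hS
  have hnorm : Tendsto norm (cobounded V ⊓ 𝓟 S) atTop :=
    tendsto_norm_cobounded_atTop.mono_left inf_le_left
  obtain ⟨z, hz1, U, hUS, hUz⟩ := exists_ultrafilter_tendsto_normalize hnorm
  replace hnorm := hnorm.mono_left hUS
  have hS : ∀ᶠ x in U, x ∈ S := hUS (mem_inf_of_right (mem_principal_self S))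
  have hAz : A z = 0 := A.eq_zero_of_isBoundedUnder hnorm hUz
    ⟨R, eventually_map.mpr <| hS.mono fun x ⟨b, hb, hAx, _⟩ => hAx ▸ hR b hb⟩
  have hCz : ∀ᶠ x in U, C (x - z) ≤ d :=
    C.eventually_map_sub_le hnorm hUz (hS.mono fun x ⟨_, _, _, hCx, _⟩ => hCx)
  have hbig : ∀ᶠ x in U, f (-z) + α / 2 < α * ⟪x, z⟫ :=
    ((tendsto_inner_atTop_of_tendsto_normalize (norm_ne_zero_iff.mp (hz1 ▸ one_ne_zero)) hnorm
      hUz).const_mul_atTop hα).eventually_gt_atTop _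
  obtain ⟨x, ⟨b, -, hAx, -, hmin⟩, hCxz, hxz⟩ := (hS.and (hCz.and hbig)).exists
  exact (add_half_mul_norm_sq_sub_lt hf hz1 hxz).not_ge
    (hmin (x - z) (by rw [map_sub, hAz, sub_zero, hAx]) hCxz)

end InnerProduct

theorem stmt18_general {m N r ℓc : ℕ}
    (nstar : (Fin r → ℝ) → ℝ)
    (hns1 : ∀ u v, nstar (u + v) ≤ nstar u + nstar v)
    (α : ℝ) (hα : 0 < α)
    (A : Matrix (Fin m) (Fin N) ℝ)
    (E : Matrix (Fin r) (Fin N) ℝ)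
    (Cm : Matrix (Fin ℓc) (Fin N) ℝ) (d : Fin ℓc → ℝ)
    (𝒞 : Set (Fin N → ℝ)) (h𝒞 : 𝒞 = {x | ∀ i, Cm.mulVec x i ≤ d i})
    (J : (Fin N → ℝ) → ℝ)
    (hJ : J = fun x => nstar (E.mulVec x) + α / 2 * ∑ j, (x j) ^ 2) :
    ∀ B : Set (Fin m → ℝ), Bornology.IsBounded B →
      ∃ M : ℝ, ∀ b ∈ B, ∀ x,
        (A.mulVec x = b ∧ x ∈ 𝒞 ∧
          ∀ y, A.mulVec y = b → y ∈ 𝒞 → J x ≤ J y) →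
        Real.sqrt (∑ j, (x j) ^ 2) ≤ M := by
  subst h𝒞 hJ
  intro B hB
  let e := WithLp.linearEquiv 2 ℝ (Fin N → ℝ)
  have hf (u v : EuclideanSpace ℝ (Fin N)) :
      nstar (E.mulVec (e (u + v))) ≤ nstar (E.mulVec (e u)) + nstar (E.mulVec (e v)) := by
    simpa [Matrix.mulVec_add] using hns1 _ _
  obtain ⟨M, hM⟩ := isBounded_iff_forall_norm_le.mp <|
    isBounded_regularizedMinimizers (f := fun y => nstar (E.mulVec (e y))) hf hα
      (A.mulVecLin ∘ₗ e.toLinearMap).toContinuousLinearMap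
      (Cm.mulVecLin ∘ₗ e.toLinearMap).toContinuousLinearMap d hB
  refine ⟨M, fun b hb x ⟨hAx, hCx, hmin⟩ => ?_⟩
  have hnorm (y : EuclideanSpace ℝ (Fin N)) : ‖y‖ ^ 2 = ∑ j, e y j ^ 2 :=
    EuclideanSpace.real_norm_sq_eq y
  have hx := hnorm (e.symm x)
  rw [e.apply_symm_apply] at hx
  rw [← hx, Real.sqrt_sq (norm_nonneg _)]
  exact hM _ ⟨b, hb, hAx, hCx, fun y hAy hCy => by simpa [hnorm] using hmin (e y) hAy hCy⟩

/-- Boundedness of the minimizers of the regularized BP-like problem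
`min ‖Ex‖⋆ + (α/2)‖x‖₂² s.t. Ax = b, Cx ≤ d` as `b` ranges over a bounded set:
for any bounded `B ⊆ ℝ^m`, the set of minimizers corresponding to `b ∈ B`
(for those `b` where the problem is feasible) is bounded. -/
theorem stmt18 {m N r ℓc : ℕ}
    (nstar : (Fin r → ℝ) → ℝ)
    (hns1 : ∀ u v, nstar (u + v) ≤ nstar u + nstar v)
    (hns2 : ∀ (c : ℝ) u, nstar (c • u) = |c| * nstar u)
    (hns3 : ∀ u, nstar u = 0 → u = 0)
    (α : ℝ) (hα : 0 < α)
    (A : Matrix (Fin m) (Fin N) ℝ) (hA : A ≠ 0)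
    (E : Matrix (Fin r) (Fin N) ℝ)
    (Cm : Matrix (Fin ℓc) (Fin N) ℝ) (d : Fin ℓc → ℝ)
    (𝒞 : Set (Fin N → ℝ)) (h𝒞 : 𝒞 = {x | ∀ i, Cm.mulVec x i ≤ d i})
    (J : (Fin N → ℝ) → ℝ)
    (hJ : J = fun x => nstar (E.mulVec x) + α / 2 * ∑ j, (x j) ^ 2) :
    ∀ B : Set (Fin m → ℝ), Bornology.IsBounded B →
      ∃ M : ℝ, ∀ b ∈ B, ∀ x,
        (A.mulVec x = b ∧ x ∈ 𝒞 ∧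
          ∀ y, A.mulVec y = b → y ∈ 𝒞 → J x ≤ J y) →
        Real.sqrt (∑ j, (x j) ^ 2) ≤ M :=
  stmt18_general nstar hns1 α hα A E Cm d 𝒞 h𝒞 J hJ
end
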